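/- arXiv:1501.01804 — 2 statements merged into one kernel-verified Lean document; each statement's English description precedes it below -/
import Mathlib

section
/- Let χ be a non-principal Dirichlet character mod q, let φ be a real number, T a positive real number, and 0 ≤ λ ≤ 1/2. Then √(2πT) · ∫_{−∞}^{∞} (S(e^y, χ_φ)/e^y) · exp(λy − (T/2)y²) dy = ∫_{−∞}^{∞} ( L(1 − λ + iφ + iξ, χ)/(1 − λ + iξ) ) · exp(−ξ²/(2T)) dξ. -/
open Complex

/-- The twisted character sum `S(x, χ_φ) = ∑_{n ≤ x} χ(n) n^{-iφ}`. -/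
noncomputable def Sphi {q : ℕ} (χ : DirichletCharacter ℂ q) (φ : ℝ) (x : ℝ) : ℂ :=
  ∑ n ∈ Finset.Icc 1 ⌊x⌋₊, χ n * (n : ℂ) ^ (-(I * (φ : ℂ)))

/-
Let `F(s) = ∫ S(e^y, χ_φ) e^{-sy} dy`, the Mellin transform of `x ↦ S(x, χ_φ)` at `-s`.
For `Re s > 1`, partial summation gives `F(s) = L(s + iφ, χ) / s`. Since `χ` is non-principal its
partial sums are bounded by `q`, so a second partial summation against `n^{-iφ}` gives
`S(x, χ_φ) = O(1 + log x)`; hence `F` is holomorphic on `Re s > 0` and the identity persists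
there by analytic continuation. On the line `s = 1 - λ + iξ` the right-hand side is therefore
`∫ F(1 - λ + iξ) e^{-ξ²/2T} dξ`, and exchanging the two integrals and evaluating the Gaussian
Fourier integral `∫ e^{-iξy} e^{-ξ²/2T} dξ = √(2πT) e^{-Ty²/2}` yields the left-hand side.
-/

section PartialSums

open Finset

theorem Function.Periodic.sum_range_mul_eq_zero {M : Type*} [AddCommMonoid M] {c : ℕ → M}
    {p : ℕ} (hc : Function.Periodic c p) (h0 : ∑ i ∈ range p, c i = 0) (k : ℕ) :
    ∑ i ∈ range (k * p), c i = 0 := by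
  induction k with
  | zero => simp
  | succ k ih =>
    rw [add_one_mul, sum_range_add, ih, zero_add, ← h0]
    exact sum_congr rfl fun i _ ↦ by simpa [add_comm] using hc.nat_mul k i

theorem Function.Periodic.sum_range_eq_sum_range_mod {M : Type*} [AddCommMonoid M] {c : ℕ → M}
    {p : ℕ} (hc : Function.Periodic c p) (h0 : ∑ i ∈ range p, c i = 0) (n : ℕ) :
    ∑ i ∈ range n, c i = ∑ i ∈ range (n % p), c i := by
  conv_lhs => rw [← Nat.div_add_mod' n p, sum_range_add, hc.sum_range_mul_eq_zero h0, zero_add]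
  exact sum_congr rfl fun i _ ↦ by simpa [add_comm] using hc.nat_mul (n / p) i

namespace DirichletCharacter

variable {q : ℕ} [NeZero q] {χ : DirichletCharacter ℂ q}

theorem sum_range_natCast_add_eq_zero (hχ : χ ≠ 1) (m : ℕ) :
    ∑ i ∈ range q, χ ((i + m : ℕ) : ZMod q) = 0 := by
  rw [← Fin.sum_univ_eq_sum_range (fun i ↦ χ ((i + m : ℕ) : ZMod q)), ← χ.sum_eq_zero_of_ne_one hχ,
    ← Equiv.sum_comp (Equiv.addRight (m : ZMod q)), ← Equiv.sum_comp (ZMod.finEquiv q).toEquiv]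
  refine Fintype.sum_congr _ _ fun i ↦ ?_
  obtain ⟨k, rfl⟩ : ∃ k, q = k + 1 := Nat.exists_eq_succ_of_ne_zero (NeZero.ne q)
  simp only [Nat.cast_add, ZMod.finEquiv]
  exact congrArg (fun a ↦ χ (a + m)) (ZMod.natCast_zmod_val (n := k + 1) i)

theorem norm_sum_range_natCast_add_le (hχ : χ ≠ 1) (m n : ℕ) :
    ‖∑ i ∈ range n, χ ((i + m : ℕ) : ZMod q)‖ ≤ q := by
  have hper : Function.Periodic (fun i ↦ χ ((i + m : ℕ) : ZMod q)) q := fun i ↦ by simp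
  rw [hper.sum_range_eq_sum_range_mod (sum_range_natCast_add_eq_zero hχ m)]
  calc ‖∑ i ∈ range (n % q), χ ((i + m : ℕ) : ZMod q)‖ ≤ ∑ i ∈ range (n % q), 1 :=
        norm_sum_le_of_le _ fun i _ ↦ χ.norm_le_one _
    _ ≤ q := by simpa using (Nat.mod_lt n (NeZero.pos q)).le

end DirichletCharacter

theorem norm_sum_range_smul_le {R E : Type*} [SeminormedRing R] [SeminormedAddCommGroup E]
    [Module R E] [IsBoundedSMul R E] (f : ℕ → R) {c : ℕ → E} {C : ℝ}
    (hc : ∀ n, ‖∑ i ∈ range n, c i‖ ≤ C) (n : ℕ) :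
    ‖∑ i ∈ range n, f i • c i‖ ≤ C * (‖f (n - 1)‖ + ∑ i ∈ range (n - 1), ‖f (i + 1) - f i‖) := by
  have hC : 0 ≤ C := by simpa using hc 0
  rw [sum_range_by_parts, mul_add, mul_sum]
  refine (norm_sub_le _ _).trans (add_le_add ?_ ((norm_sum_le _ _).trans (sum_le_sum fun i _ ↦ ?_)))
  · exact (norm_smul_le _ _).trans (by rw [mul_comm]; gcongr; exact hc n)
  · exact (norm_smul_le _ _).trans (by rw [mul_comm]; gcongr; exact hc (i + 1))

theorem Complex.norm_exp_I_mul_ofReal_sub_exp_I_mul_ofReal_le (x y : ℝ) :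
    ‖cexp (I * x) - cexp (I * y)‖ ≤ |x - y| := by
  have h : cexp (I * x) - cexp (I * y) = cexp (I * y) * (cexp (I * ↑(x - y)) - 1) := by
    rw [mul_sub, ← Complex.exp_add]; push_cast; ring_nf
  rw [h, norm_mul, Complex.norm_exp_I_mul_ofReal, one_mul, ← Real.norm_eq_abs]
  exact Real.norm_exp_I_mul_ofReal_sub_one_le

theorem Complex.natCast_cpow_neg_I_mul {n : ℕ} (hn : n ≠ 0) (φ : ℝ) :
    (n : ℂ) ^ (-(I * φ)) = cexp (I * ↑(-(φ * Real.log n))) := by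
  rw [cpow_def_of_ne_zero (Nat.cast_ne_zero.2 hn), ← ofReal_natCast, ← ofReal_log n.cast_nonneg]
  push_cast; ring_nf

theorem DirichletCharacter.norm_mul_natCast_cpow_neg_I_mul_le_one {q : ℕ}
    (χ : DirichletCharacter ℂ q) (φ : ℝ) {n : ℕ} (hn : n ≠ 0) :
    ‖χ n * (n : ℂ) ^ (-(I * φ))‖ ≤ 1 := by
  rw [norm_mul, natCast_cpow_neg_I_mul hn, norm_exp_I_mul_ofReal, mul_one]
  exact χ.norm_le_one _

theorem norm_Sphi_le {q : ℕ} [NeZero q] {χ : DirichletCharacter ℂ q} (hχ : χ ≠ 1) (φ : ℝ)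
    {x : ℝ} (hx : 1 ≤ x) : ‖Sphi χ φ x‖ ≤ q * (1 + |φ| * Real.log x) := by
  set N := ⌊x⌋₊
  have hN : 1 ≤ N := Nat.one_le_floor_iff _ |>.2 hx
  -- Indexing by `i = n - 1` keeps the junk value `0 ^ (-(I * φ))` out of the summation by parts.
  set f : ℕ → ℂ := fun i ↦ cexp (I * ↑(-(φ * Real.log (i + 1 : ℕ))))
  have hS : Sphi χ φ x = ∑ i ∈ range N, f i • χ ((i + 1 : ℕ) : ZMod q) := by
    have h := sum_Ico_add' (fun n : ℕ ↦ χ n * (n : ℂ) ^ (-(I * φ))) 0 N 1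
    rw [zero_add, Ico_add_one_right_eq_Icc, ← range_eq_Ico] at h
    rw [Sphi, ← h]
    refine sum_congr rfl fun i _ ↦ ?_
    rw [smul_eq_mul, mul_comm, natCast_cpow_neg_I_mul i.succ_ne_zero]
  have hf (i : ℕ) : ‖f i‖ = 1 := norm_exp_I_mul_ofReal _
  have hdiff (i : ℕ) :
      ‖f (i + 1) - f i‖ ≤ |φ| * (Real.log (i + 1 + 1 : ℕ) - Real.log (i + 1 : ℕ)) := by
    refine (norm_exp_I_mul_ofReal_sub_exp_I_mul_ofReal_le _ _).trans_eq ?_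
    rw [← neg_sub', ← mul_sub, abs_neg, abs_mul, abs_of_nonneg (sub_nonneg.2 ?_)]
    exact Real.log_le_log (by positivity) (by gcongr; omega)
  have htel : ∑ i ∈ range (N - 1), (Real.log (i + 1 + 1 : ℕ) - Real.log (i + 1 : ℕ)) =
      Real.log N := by
    rw [sum_range_sub (fun i ↦ Real.log (i + 1 : ℕ)), Nat.sub_add_cancel hN]
    simp
  calc ‖Sphi χ φ x‖ ≤ q * (‖f (N - 1)‖ + ∑ i ∈ range (N - 1), ‖f (i + 1) - f i‖) := by
        rw [hS]; exact norm_sum_range_smul_le f (χ.norm_sum_range_natCast_add_le hχ 1) N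
    _ ≤ q * (1 + |φ| * Real.log N) := by
        rw [hf, ← htel, mul_sum]
        gcongr with i
        exact hdiff i
    _ ≤ q * (1 + |φ| * Real.log x) := by
        gcongr
        exact Nat.floor_le (by linarith)

end PartialSums

section MellinExp

open MeasureTheory Set

variable {E : Type*} [NormedAddCommGroup E] [NormedSpace ℂ E]

theorem exp_smul_ofReal_exp_cpow_smul (f : ℝ → E) (s : ℂ) (y : ℝ) :
    Real.exp y • ((Real.exp y : ℂ) ^ (s - 1) • f (Real.exp y)) = cexp (s * y) • f (Real.exp y) := by
  rw [← smul_assoc, ofReal_exp, cpow_def_of_ne_zero (Complex.exp_ne_zero _), Complex.log_exp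
    (by simp [Real.pi_pos]) (by simp [Real.pi_nonneg]), Complex.real_smul, ofReal_exp,
    ← Complex.exp_add]
  congr 2
  ring

theorem mellin_eq_integral_exp (f : ℝ → E) (s : ℂ) :
    mellin f s = ∫ y : ℝ, cexp (s * y) • f (Real.exp y) := by
  have h := integral_image_eq_integral_abs_deriv_smul MeasurableSet.univ
    (fun y _ ↦ (Real.hasDerivAt_exp y).hasDerivWithinAt) Real.exp_injective.injOn
    (fun t : ℝ ↦ (t : ℂ) ^ (s - 1) • f t)
  rw [image_univ, Real.range_exp, setIntegral_univ] at h
  simp_rw [mellin, h, abs_of_pos (Real.exp_pos _), exp_smul_ofReal_exp_cpow_smul]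

theorem mellinConvergent_iff_integrable_exp (f : ℝ → E) (s : ℂ) :
    MellinConvergent f s ↔ Integrable (fun y : ℝ ↦ cexp (s * y) • f (Real.exp y)) := by
  have h := integrableOn_image_iff_integrableOn_abs_deriv_smul MeasurableSet.univ
    (fun y _ ↦ (Real.hasDerivAt_exp y).hasDerivWithinAt) Real.exp_injective.injOn
    (fun t : ℝ ↦ (t : ℂ) ^ (s - 1) • f t)
  rw [image_univ, Real.range_exp, integrableOn_univ] at h
  simp_rw [MellinConvergent, h, abs_of_pos (Real.exp_pos _), exp_smul_ofReal_exp_cpow_smul]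

end MellinExp

theorem LSeries_mul_cpow_neg (f : ℕ → ℂ) (a s : ℂ) :
    LSeries (fun n ↦ f n * (n : ℂ) ^ (-a)) s = LSeries f (s + a) := by
  refine tsum_congr fun n ↦ ?_
  rcases eq_or_ne n 0 with rfl | hn
  · simp
  rw [LSeries.term_of_ne_zero hn, LSeries.term_of_ne_zero hn,
    cpow_add _ _ (Nat.cast_ne_zero.2 hn), cpow_neg]
  ring

section MellinSphi

open MeasureTheory Set Filter Asymptotics Topology

variable {q : ℕ} {χ : DirichletCharacter ℂ q} {φ : ℝ}

theorem Sphi_eq_zero_of_lt_one {x : ℝ} (hx : x < 1) : Sphi χ φ x = 0 := by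
  simp [Sphi, Nat.floor_eq_zero.2 hx]

theorem Sphi_eventuallyEq_zero : Sphi χ φ =ᶠ[𝓝[>] 0] 0 := by
  filter_upwards [mem_nhdsWithin_of_mem_nhds (Iio_mem_nhds one_pos)] with x hx
  exact Sphi_eq_zero_of_lt_one hx

theorem norm_Sphi_le_floor (x : ℝ) : ‖Sphi χ φ x‖ ≤ ⌊x⌋₊ := by
  calc ‖Sphi χ φ x‖ ≤ ∑ n ∈ Finset.Icc 1 ⌊x⌋₊, (1 : ℝ) := norm_sum_le_of_le _ fun n hn ↦ ?_
    _ = ⌊x⌋₊ := by simp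
  exact χ.norm_mul_natCast_cpow_neg_I_mul_le_one φ (by simp at hn; omega)

theorem measurable_Sphi : Measurable (Sphi χ φ) :=
  (measurable_from_nat (f := fun N ↦ ∑ n ∈ Finset.Icc 1 N, χ n * (n : ℂ) ^ (-(I * φ)))).comp
    Nat.measurable_floor

theorem locallyIntegrable_Sphi : LocallyIntegrable (Sphi χ φ) := by
  refine continuous_id.locallyIntegrable.mono measurable_Sphi.aestronglyMeasurable
    (.of_forall fun x ↦ norm_Sphi_le_floor x |>.trans ?_)
  rcases le_total 0 x with hx | hx
  · simpa [abs_of_nonneg hx] using Nat.floor_le hx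
  · simp [Nat.floor_eq_zero.2 (hx.trans_lt one_pos)]

variable [NeZero q]

theorem Sphi_isBigO_rpow (hχ : χ ≠ 1) {ε : ℝ} (hε : 0 < ε) : Sphi χ φ =O[atTop] (· ^ ε) := by
  refine IsBigO.of_bound (q * (1 + |φ| / ε)) ?_
  filter_upwards [eventually_ge_atTop 1] with x hx
  have hxε : 1 ≤ x ^ ε := Real.one_le_rpow hx hε.le
  have hlog : Real.log x ≤ x ^ ε / ε := Real.log_le_rpow_div (by linarith) hε
  rw [Real.norm_of_nonneg (by positivity)]
  calc ‖Sphi χ φ x‖ ≤ q * (1 + |φ| * Real.log x) := norm_Sphi_le hχ φ hx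
    _ ≤ q * (x ^ ε + |φ| * (x ^ ε / ε)) := by gcongr
    _ = q * (1 + |φ| / ε) * x ^ ε := by ring

theorem mellinConvergent_Sphi (hχ : χ ≠ 1) {s : ℂ} (hs : s.re < 0) :
    MellinConvergent (Sphi χ φ) s :=
  mellinConvergent_of_isBigO_rpow (locallyIntegrable_Sphi.locallyIntegrableOn _)
    (Sphi_isBigO_rpow hχ (ε := -(s.re / 2)) (by linarith)) (by linarith : s.re < s.re / 2)
    (Sphi_eventuallyEq_zero.trans_isBigO (isBigO_zero _ _)) (sub_one_lt s.re)

theorem differentiableAt_mellin_Sphi (hχ : χ ≠ 1) {s : ℂ} (hs : s.re < 0) :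
    DifferentiableAt ℂ (mellin (Sphi χ φ)) s :=
  mellin_differentiableAt_of_isBigO_rpow (locallyIntegrable_Sphi.locallyIntegrableOn _)
    (Sphi_isBigO_rpow hχ (ε := -(s.re / 2)) (by linarith)) (by linarith : s.re < s.re / 2)
    (Sphi_eventuallyEq_zero.trans_isBigO (isBigO_zero _ _)) (sub_one_lt s.re)

theorem mellin_Sphi_neg_of_one_lt_re {s : ℂ} (hs : 1 < s.re) :
    mellin (Sphi χ φ) (-s) = χ.LFunction (s + I * φ) / s := by
  have hO : (fun n : ℕ ↦ ∑ k ∈ Finset.Icc 1 n, ‖χ k * (k : ℂ) ^ (-(I * φ))‖) =O[atTop]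
      fun n ↦ (n : ℝ) ^ (1 : ℝ) := by
    refine IsBigO.of_bound 1 (.of_forall fun n ↦ ?_)
    rw [Real.rpow_one, one_mul, Real.norm_natCast,
      Real.norm_of_nonneg (Finset.sum_nonneg fun _ _ ↦ norm_nonneg _)]
    calc ∑ k ∈ Finset.Icc 1 n, ‖χ k * (k : ℂ) ^ (-(I * φ))‖ ≤ ∑ k ∈ Finset.Icc 1 n, (1 : ℝ) :=
          Finset.sum_le_sum fun k hk ↦
            χ.norm_mul_natCast_cpow_neg_I_mul_le_one φ (by simp at hk; omega)
      _ = n := by simp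
  have hL := LSeries_eq_mul_integral' _ zero_le_one (by simpa using hs) hO
  rw [LSeries_mul_cpow_neg, ← χ.LFunction_eq_LSeries (by simp; linarith)] at hL
  rw [hL, mul_div_cancel_left₀ _ (ne_zero_of_re_pos (by linarith)), mellin,
    setIntegral_eq_of_subset_of_forall_sdiff_eq_zero measurableSet_Ioi (Ici_subset_Ioi.2 one_pos)
      fun x hx ↦ by rw [Sphi_eq_zero_of_lt_one (not_le.1 hx.2), smul_zero],
    ← integral_Ici_eq_integral_Ioi]
  refine setIntegral_congr_fun measurableSet_Ici fun t _ ↦ ?_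
  rw [smul_eq_mul, mul_comm, neg_add']
  rfl

theorem mellin_Sphi_neg (hχ : χ ≠ 1) {s : ℂ} (hs : 0 < s.re) :
    mellin (Sphi χ φ) (-s) = χ.LFunction (s + I * φ) / s := by
  have hU : IsOpen {z : ℂ | 0 < z.re} := isOpen_lt continuous_const continuous_re
  have hF : AnalyticOnNhd ℂ (fun z ↦ mellin (Sphi χ φ) (-z)) {z : ℂ | 0 < z.re} :=
    DifferentiableOn.analyticOnNhd (fun z hz ↦ DifferentiableAt.differentiableWithinAt <|
      (differentiableAt_mellin_Sphi hχ (by simpa using hz)).comp z differentiableAt_id.neg) hU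
  have hG : AnalyticOnNhd ℂ (fun z ↦ χ.LFunction (z + I * φ) / z) {z : ℂ | 0 < z.re} :=
    DifferentiableOn.analyticOnNhd (fun z hz ↦ DifferentiableAt.differentiableWithinAt <|
      ((DirichletCharacter.differentiable_LFunction hχ).comp (differentiable_id.add_const _) z).div
        differentiableAt_id (ne_zero_of_re_pos hz)) hU
  have hagree : (fun z ↦ mellin (Sphi χ φ) (-z)) =ᶠ[𝓝 2] fun z ↦ χ.LFunction (z + I * φ) / z := by
    filter_upwards [(isOpen_lt continuous_const continuous_re).mem_nhds
      (by norm_num : (1 : ℝ) < (2 : ℂ).re)] with z hz using mellin_Sphi_neg_of_one_lt_re hz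
  exact hF.eqOn_of_preconnected_of_eventuallyEq hG (convex_halfSpace_re_gt 0).isPreconnected
    (by simp : (2 : ℂ) ∈ {z : ℂ | 0 < z.re}) hagree hs

end MellinSphi

section Gaussian

open MeasureTheory

theorem integral_cexp_neg_I_mul_mul_gaussian {T : ℝ} (hT : 0 < T) (y : ℝ) :
    ∫ ξ : ℝ, cexp (-(I * ξ * y)) * (Real.exp (-ξ ^ 2 / (2 * T)) : ℂ) =
      Real.sqrt (2 * Real.pi * T) * Real.exp (-(T / 2 * y ^ 2)) := by
  have hb : 0 < (1 / (2 * T) : ℂ).re := by norm_cast; positivity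
  have hT' : (T : ℂ) ≠ 0 := ofReal_ne_zero.2 hT.ne'
  convert fourierIntegral_gaussian hb (-y) using 1
  · refine integral_congr_ae (.of_forall fun ξ ↦ ?_)
    simp only [ofReal_exp]
    congr 2 <;> push_cast <;> ring
  · rw [Real.sqrt_eq_rpow, ofReal_cpow (by positivity), ofReal_exp]
    congr 2 <;> push_cast <;> field_simp
    ring

theorem integral_fourier_mul_gaussian {h : ℝ → ℂ} (hh : Integrable h) {T : ℝ} (hT : 0 < T) :
    ∫ ξ : ℝ, (∫ y : ℝ, h y * cexp (-(I * ξ * y))) * (Real.exp (-ξ ^ 2 / (2 * T)) : ℂ) =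
      Real.sqrt (2 * Real.pi * T) * ∫ y : ℝ, h y * Real.exp (-(T / 2 * y ^ 2)) := by
  have hg : Integrable fun ξ : ℝ ↦ Real.exp (-ξ ^ 2 / (2 * T)) :=
    (integrable_exp_neg_mul_sq (by positivity : 0 < (2 * T)⁻¹)).congr
      (.of_forall fun ξ ↦ by ring_nf)
  have hint : Integrable (Function.uncurry fun (ξ y : ℝ) ↦
      h y * cexp (-(I * ξ * y)) * (Real.exp (-ξ ^ 2 / (2 * T)) : ℂ)) (volume.prod volume) := by
    refine (hg.ofReal.mul_prod hh).norm.mono' ?_ (.of_forall fun p ↦ ?_)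
    · have hc : Continuous fun p : ℝ × ℝ ↦
          cexp (-(I * p.1 * p.2)) * (Real.exp (-p.1 ^ 2 / (2 * T)) : ℂ) := by fun_prop
      exact (hh.aestronglyMeasurable.comp_snd.mul hc.aestronglyMeasurable).congr
        (.of_forall fun p ↦ (mul_assoc _ _ _).symm)
    · simp [Function.uncurry, Complex.norm_exp, mul_comm]
  calc ∫ ξ : ℝ, (∫ y : ℝ, h y * cexp (-(I * ξ * y))) * (Real.exp (-ξ ^ 2 / (2 * T)) : ℂ)
      = ∫ ξ : ℝ, ∫ y : ℝ, h y * cexp (-(I * ξ * y)) * (Real.exp (-ξ ^ 2 / (2 * T)) : ℂ) := by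
        simp_rw [← integral_mul_const]
    _ = ∫ y : ℝ, ∫ ξ : ℝ, h y * cexp (-(I * ξ * y)) * (Real.exp (-ξ ^ 2 / (2 * T)) : ℂ) :=
        integral_integral_swap hint
    _ = ∫ y : ℝ, Real.sqrt (2 * Real.pi * T) * (h y * Real.exp (-(T / 2 * y ^ 2))) := by
        refine integral_congr_ae (.of_forall fun y ↦ ?_)
        simp_rw [mul_assoc (h y), integral_const_mul, integral_cexp_neg_I_mul_mul_gaussian hT y]
        ring
    _ = _ := integral_const_mul _ _

end Gaussian

open MeasureTheory in
theorem statement_10_general (q : ℕ) [NeZero q] (χ : DirichletCharacter ℂ q) (hχ : χ ≠ 1)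
    (φ T lam : ℝ) (hT : 0 < T) (hlam : lam ≤ 1 / 2) :
    (Real.sqrt (2 * Real.pi * T) : ℂ) *
        ∫ y : ℝ, Sphi χ φ (Real.exp y) / (Real.exp y : ℂ) *
          (Real.exp (lam * y - T / 2 * y ^ 2) : ℂ) =
      ∫ ξ : ℝ, χ.LFunction (1 - lam + I * φ + I * ξ) / (1 - lam + I * ξ) *
        (Real.exp (-ξ ^ 2 / (2 * T)) : ℂ) := by
  set h : ℝ → ℂ := fun y ↦ cexp (-(1 - lam) * y) • Sphi χ φ (Real.exp y)
  have hh : Integrable h :=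
    (mellinConvergent_iff_integrable_exp _ _).1 <| mellinConvergent_Sphi hχ (by simp; linarith)
  have hL (ξ : ℝ) : χ.LFunction (1 - lam + I * φ + I * ξ) / (1 - lam + I * ξ) =
      ∫ y : ℝ, h y * cexp (-(I * ξ * y)) := by
    rw [add_right_comm, ← mellin_Sphi_neg hχ (by simp; linarith), mellin_eq_integral_exp]
    refine integral_congr_ae (.of_forall fun y ↦ ?_)
    simp only [h, smul_eq_mul]
    rw [mul_right_comm, ← Complex.exp_add]
    congr 2
    ring
  calc _ = Real.sqrt (2 * Real.pi * T) * ∫ y : ℝ, h y * Real.exp (-(T / 2 * y ^ 2)) := by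
        congr 1
        refine integral_congr_ae (.of_forall fun y ↦ ?_)
        simp only [h, smul_eq_mul]
        rw [div_mul_eq_mul_div, mul_div_assoc, ← ofReal_div, ← Real.exp_sub, mul_comm (cexp _),
          mul_assoc, ofReal_exp, ofReal_exp, ← Complex.exp_add]
        congr 2
        push_cast
        ring
    _ = _ := (integral_fourier_mul_gaussian hh hT).symm
    _ = _ := by simp_rw [hL]

open MeasureTheory in
/-- Lemma 2.2 of Granville–Soundararajan, "Large character sums: Burgess's
theorem and zeros of L-functions". -/
theorem statement_10 (q : ℕ) [NeZero q] (χ : DirichletCharacter ℂ q) (hχ : χ ≠ 1)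
    (φ T lam : ℝ) (hT : 0 < T) (hlam0 : 0 ≤ lam) (hlam : lam ≤ 1 / 2) :
    (Real.sqrt (2 * Real.pi * T) : ℂ) *
        ∫ y : ℝ, Sphi χ φ (Real.exp y) / (Real.exp y : ℂ) *
          (Real.exp (lam * y - T / 2 * y ^ 2) : ℂ) =
      ∫ ξ : ℝ, χ.LFunction (1 - lam + I * φ + I * ξ) / (1 - lam + I * ξ) *
        (Real.exp (-ξ ^ 2 / (2 * T)) : ℂ) :=
  statement_10_general q χ hχ φ T lam hT hlam
end

section
/- Let χ be a non-principal Dirichlet character mod q, and let s = σ + it be a complex number with 0 < σ < 1. Then |L(s,χ)| ≤ |s|·( (q^{1−σ} − 1)/(1−σ) + q^{1−σ}/σ ). -/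
/-!
For `1 < re s`, partial summation gives `L(s,χ) = s ∫_1^∞ S(t,χ) t^(-s-1) dt`. As `χ` sums
to zero over a period, `|S(t,χ)| ≤ q`, so the integral is a Mellin transform of a bounded
function and is holomorphic on `re s > 0`; by analytic continuation the identity holds there
too. Splitting the integral at `q` and using `|S(t,χ)| ≤ t` on `(1,q]` and `|S(t,χ)| ≤ q`
beyond gives the bound.
-/

open Complex MeasureTheory Set Filter Topology

section IntegralAgainstCpow

variable {f : ℝ → ℂ}

lemma norm_ofReal_cpow_neg_add_one {t : ℝ} (ht : 0 < t) (s : ℂ) :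
    ‖(t : ℂ) ^ (-(s + 1))‖ = t ^ (-s.re - 1) := by
  rw [norm_cpow_eq_rpow_re_of_pos ht, neg_re, add_re, one_re, neg_add']

lemma integrableOn_Ioi_one_mul_cpow {C : ℝ} (hf : AEStronglyMeasurable f)
    (hC : ∀ t, ‖f t‖ ≤ C) {s : ℂ} (hs : 0 < s.re) :
    IntegrableOn (fun t : ℝ ↦ f t * (t : ℂ) ^ (-(s + 1))) (Ioi 1) := by
  have hcpow : ContinuousOn (fun t : ℝ ↦ (t : ℂ) ^ (-(s + 1))) (Ioi 1) := fun t ht ↦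
    (continuousAt_ofReal_cpow_const t _ (.inr (one_pos.trans ht).ne')).continuousWithinAt
  refine Integrable.mono'
    ((integrableOn_Ioi_rpow_of_lt (a := -s.re - 1) (by linarith) one_pos).const_mul C)
    (hf.restrict.mul (hcpow.aestronglyMeasurable measurableSet_Ioi)) ?_
  filter_upwards [ae_restrict_mem measurableSet_Ioi] with t ht
  rw [norm_mul, norm_ofReal_cpow_neg_add_one (one_pos.trans ht)]
  exact mul_le_mul_of_nonneg_right (hC t) (Real.rpow_nonneg (one_pos.trans ht).le _)

lemma mellin_indicator_Ioi_one_neg (f : ℝ → ℂ) (s : ℂ) :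
    mellin ((Ioi 1).indicator f) (-s) = ∫ t in Ioi 1, f t * (t : ℂ) ^ (-(s + 1)) := by
  have : (fun t : ℝ ↦ (t : ℂ) ^ (-(s + 1)) • (Ioi 1).indicator f t) =
      (Ioi 1).indicator fun t ↦ f t * (t : ℂ) ^ (-(s + 1)) := by
    ext t
    by_cases ht : t ∈ Ioi 1 <;> simp [ht, mul_comm]
  rw [mellin, show -s - 1 = -(s + 1) by ring, this, setIntegral_indicator measurableSet_Ioi,
    Ioi_inter_Ioi, max_eq_right zero_le_one]

lemma differentiableOn_integral_Ioi_one_mul_cpow {C : ℝ} (hf : AEStronglyMeasurable f)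
    (hC : ∀ t, ‖f t‖ ≤ C) :
    DifferentiableOn ℂ (fun s : ℂ ↦ ∫ t in Ioi 1, f t * (t : ℂ) ^ (-(s + 1)))
      {s | 0 < s.re} := by
  intro s hs
  simp_rw [← mellin_indicator_Ioi_one_neg]
  have hg : ∀ t, ‖(Ioi 1).indicator f t‖ ≤ C := fun t ↦
    (norm_indicator_le_norm_self f t).trans (hC t)
  have hmeas : AEStronglyMeasurable ((Ioi 1).indicator f) := hf.indicator measurableSet_Ioi
  have hd : DifferentiableAt ℂ (mellin ((Ioi 1).indicator f)) (-s) := by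
    refine mellin_differentiableAt_of_isBigO_rpow (a := 0) (b := -(s.re + 1)) ?_ ?_
      (by simpa using hs) ?_ (by simp)
    · exact ((memLp_top_of_bound hmeas C (.of_forall hg)).locallyIntegrable
        le_top).locallyIntegrableOn _
    · exact .of_bound C (.of_forall fun t ↦ by simpa using hg t)
    · refine .of_bound 0 ?_
      filter_upwards [nhdsWithin_le_nhds (eventually_lt_nhds one_pos)] with t ht
      simp [indicator_of_notMem (show t ∉ Ioi 1 from not_lt.mpr ht.le)]
  exact (hd.comp s differentiableAt_id.neg).differentiableWithinAt

lemma norm_setIntegral_Ioc_mul_cpow_le {s : ℂ} {X : ℝ} (hX : 1 ≤ X) (hs : s.re < 1)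
    (hf : ∀ t ∈ Ioc 1 X, ‖f t‖ ≤ t) :
    ‖∫ t in Ioc 1 X, f t * (t : ℂ) ^ (-(s + 1))‖ ≤ (X ^ (1 - s.re) - 1) / (1 - s.re) := by
  have hint : IntegrableOn (fun t : ℝ ↦ t ^ (-s.re)) (Ioc 1 X) :=
    (intervalIntegrable_iff_integrableOn_Ioc_of_le hX).mp
      (intervalIntegral.intervalIntegrable_rpow' (by linarith))
  calc ‖∫ t in Ioc 1 X, f t * (t : ℂ) ^ (-(s + 1))‖ ≤ ∫ t in Ioc 1 X, t ^ (-s.re) := by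
        refine norm_integral_le_of_norm_le hint ?_
        filter_upwards [ae_restrict_mem measurableSet_Ioc] with t ht
        have ht0 : 0 < t := one_pos.trans ht.1
        calc ‖f t * (t : ℂ) ^ (-(s + 1))‖ = ‖f t‖ * t ^ (-s.re - 1) := by
              rw [norm_mul, norm_ofReal_cpow_neg_add_one ht0]
          _ ≤ t * t ^ (-s.re - 1) := by gcongr; exact hf t ht
          _ = t ^ (-s.re) := by
              rw [Real.rpow_sub ht0, Real.rpow_one, mul_div_cancel₀ _ ht0.ne']
    _ = (X ^ (1 - s.re) - 1) / (1 - s.re) := by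
        rw [← intervalIntegral.integral_of_le hX, integral_rpow (.inl (by linarith)),
          Real.one_rpow, neg_add_eq_sub]

lemma norm_setIntegral_Ioi_mul_cpow_le {s : ℂ} {X C : ℝ} (hX : 0 < X) (hs : 0 < s.re)
    (hf : ∀ t ∈ Ioi X, ‖f t‖ ≤ C) :
    ‖∫ t in Ioi X, f t * (t : ℂ) ^ (-(s + 1))‖ ≤ C * X ^ (-s.re) / s.re := by
  calc ‖∫ t in Ioi X, f t * (t : ℂ) ^ (-(s + 1))‖
      ≤ ∫ t in Ioi X, C * t ^ (-s.re - 1) := by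
        refine norm_integral_le_of_norm_le
          ((integrableOn_Ioi_rpow_of_lt (by linarith) hX).const_mul C) ?_
        filter_upwards [ae_restrict_mem measurableSet_Ioi] with t ht
        have ht0 : 0 < t := hX.trans ht
        rw [norm_mul, norm_ofReal_cpow_neg_add_one ht0]
        exact mul_le_mul_of_nonneg_right (hf t ht) (Real.rpow_nonneg ht0.le _)
    _ = C * X ^ (-s.re) / s.re := by
        rw [integral_const_mul, integral_Ioi_rpow_of_lt (by linarith) hX, sub_add_cancel,
          neg_div_neg_eq, mul_div_assoc]

end IntegralAgainstCpow

namespace DirichletCharacter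

variable {q : ℕ} (χ : DirichletCharacter ℂ q)

lemma map_natCast_zero_of_ne_one (hχ : χ ≠ 1) : χ ((0 : ℕ) : ZMod q) = 0 := by
  have : Nontrivial (ZMod q) := ZMod.nontrivial_iff.mpr fun h ↦ hχ (χ.level_one' h)
  simpa using χ.map_nonunit not_isUnit_zero

lemma sum_Icc_one_eq_sum_range (hχ : χ ≠ 1) (n : ℕ) :
    ∑ k ∈ Finset.Icc 1 n, χ k = ∑ k ∈ Finset.range (n + 1), χ k := by
  rw [Nat.range_succ_eq_Icc_zero, ← Finset.insert_Icc_add_one_left_eq_Icc n.zero_le,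
    Finset.sum_insert (by simp), χ.map_natCast_zero_of_ne_one hχ, zero_add, zero_add]

lemma sum_norm_Icc_one_le (n : ℕ) : ∑ k ∈ Finset.Icc 1 n, ‖χ k‖ ≤ n := by
  simpa using Finset.sum_le_sum fun k (_ : k ∈ Finset.Icc 1 n) ↦ χ.norm_le_one k

noncomputable def partialSum (x : ℝ) : ℂ := ∑ n ∈ Finset.Icc 1 ⌊x⌋₊, χ n

lemma measurable_partialSum : Measurable χ.partialSum :=
  (measurable_from_nat (f := fun n : ℕ ↦ ∑ k ∈ Finset.Icc 1 n, χ k)).comp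
    Nat.measurable_floor

lemma norm_partialSum_le_self {x : ℝ} (hx : 0 ≤ x) : ‖χ.partialSum x‖ ≤ x :=
  (norm_sum_le _ _).trans ((χ.sum_norm_Icc_one_le _).trans (Nat.floor_le hx))

variable [NeZero q]

lemma sum_range_level_eq_zero (hχ : χ ≠ 1) : ∑ k ∈ Finset.range q, χ k = 0 := by
  rw [← χ.sum_eq_zero_of_ne_one hχ]
  exact Finset.sum_nbij' (↑) ZMod.val (by simp) (fun a _ ↦ Finset.mem_range.mpr a.val_lt)
    (fun k hk ↦ ZMod.val_cast_of_lt (Finset.mem_range.mp hk)) (by simp) (by simp)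

lemma norm_sum_range_le_level (hχ : χ ≠ 1) (n : ℕ) :
    ‖∑ k ∈ Finset.range n, χ k‖ ≤ q := by
  induction n using Nat.strong_induction_on with
  | _ n ih =>
    rcases le_or_gt n q with hn | hn
    · calc ‖∑ k ∈ Finset.range n, χ k‖
          ≤ ∑ k ∈ Finset.range n, ‖χ k‖ := norm_sum_le _ _
        _ ≤ n := by
          simpa using Finset.sum_le_sum fun k (_ : k ∈ Finset.range n) ↦ χ.norm_le_one k
        _ ≤ q := by exact_mod_cast hn
    · obtain ⟨m, rfl⟩ := Nat.exists_eq_add_of_le hn.le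
      simpa [Finset.sum_range_add, χ.sum_range_level_eq_zero hχ] using
        ih m (by linarith [NeZero.pos q])

lemma norm_partialSum_le_level (hχ : χ ≠ 1) (x : ℝ) : ‖χ.partialSum x‖ ≤ q := by
  rw [partialSum, χ.sum_Icc_one_eq_sum_range hχ]
  exact χ.norm_sum_range_le_level hχ _

lemma LFunction_eq_mul_integral_of_one_lt_re {s : ℂ} (hs : 1 < s.re) :
    χ.LFunction s = s * ∫ t in Ioi 1, χ.partialSum t * (t : ℂ) ^ (-(s + 1)) := by
  refine (LFunction_eq_LSeries χ hs).trans (LSeries_eq_mul_integral' _ zero_le_one hs ?_)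
  refine Asymptotics.isBigO_of_le _ fun n ↦ ?_
  rw [Real.rpow_one, Real.norm_of_nonneg (Finset.sum_nonneg fun _ _ ↦ norm_nonneg _),
    Real.norm_natCast]
  exact χ.sum_norm_Icc_one_le n

theorem LFunction_eq_mul_integral (hχ : χ ≠ 1) {s : ℂ} (hs : 0 < s.re) :
    χ.LFunction s = s * ∫ t in Ioi 1, χ.partialSum t * (t : ℂ) ^ (-(s + 1)) := by
  have hU : IsOpen {s : ℂ | 0 < s.re} := isOpen_lt continuous_const continuous_re
  have hdiff : DifferentiableOn ℂ
      (fun s : ℂ ↦ s * ∫ t in Ioi 1, χ.partialSum t * (t : ℂ) ^ (-(s + 1)))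
      {s | 0 < s.re} :=
    differentiableOn_id.mul (differentiableOn_integral_Ioi_one_mul_cpow
      χ.measurable_partialSum.aestronglyMeasurable (χ.norm_partialSum_le_level hχ))
  refine AnalyticOnNhd.eqOn_of_preconnected_of_eventuallyEq
    ((differentiable_LFunction hχ).differentiableOn.analyticOnNhd hU) (hdiff.analyticOnNhd hU)
    (convex_halfSpace_re_gt 0).isPreconnected (z₀ := 2) (by simp) ?_ hs
  filter_upwards [(isOpen_lt continuous_const continuous_re).mem_nhds
    (show (1 : ℝ) < (2 : ℂ).re by simp)] with s hs
  exact χ.LFunction_eq_mul_integral_of_one_lt_re hs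

end DirichletCharacter

/-- The elementary bound for `|L(s,χ)|` in the critical strip used in the proof
of Proposition 2.4 of Granville–Soundararajan, "Large character sums: Burgess's
theorem and zeros of L-functions". -/
theorem statement_18 (q : ℕ) [NeZero q] (χ : DirichletCharacter ℂ q) (hχ : χ ≠ 1)
    (s : ℂ) (h0 : 0 < s.re) (h1 : s.re < 1) :
    ‖χ.LFunction s‖ ≤ ‖s‖ *
      (((q : ℝ) ^ (1 - s.re) - 1) / (1 - s.re) + (q : ℝ) ^ (1 - s.re) / s.re) := by
  have hq : (1 : ℝ) ≤ q := by exact_mod_cast NeZero.one_le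
  have hint := integrableOn_Ioi_one_mul_cpow χ.measurable_partialSum.aestronglyMeasurable
    (χ.norm_partialSum_le_level hχ) h0
  rw [χ.LFunction_eq_mul_integral hχ h0, norm_mul, ← Ioc_union_Ioi_eq_Ioi hq,
    setIntegral_union (Ioc_disjoint_Ioi le_rfl) measurableSet_Ioi
      (hint.mono_set Ioc_subset_Ioi_self) (hint.mono_set (Ioi_subset_Ioi hq))]
  have hIoc := norm_setIntegral_Ioc_mul_cpow_le hq h1 fun t ht ↦
    χ.norm_partialSum_le_self (zero_le_one.trans ht.1.le)
  have hIoi := norm_setIntegral_Ioi_mul_cpow_le (zero_lt_one.trans_le hq) h0 fun t _ ↦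
    χ.norm_partialSum_le_level hχ t
  rw [← Real.rpow_one_add' (by positivity) (by linarith), ← sub_eq_add_neg] at hIoi
  gcongr
  exact (norm_add_le _ _).trans (add_le_add hIoc hIoi)
end
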